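/- arXiv:2503.24337 — 2 statements merged into one kernel-verified Lean document; each statement's English description precedes it below -/
import Mathlib

section
/- Let (Mⁿ,g,f,λ), n ≥ 3, be a gradient ρ-Einstein soliton. Then its Cotton tensor satisfies C_{ijk} = −((1 − 2(n−1)ρ)/(2(n−1)))·(∇ᵢR g_{jk} − ∇ⱼR g_{ik}) + R_{jikl}∇^l f. -/
/-! By the soliton equation, ∇ᵢR_{jk} − ∇ⱼR_{ik} is ρ(∇ᵢR g_{jk} − ∇ⱼR g_{ik}) minus the
antisymmetrised third derivative of f, which the Ricci identity turns into R_{jikl}∇^l f.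
The remaining trace terms combine to the coefficient ρ − 1/(2(n−1)). -/

theorem covDerivRicci_sub_swap_eq {ι : Type*} [Fintype ι] (ρ : ℝ)
    (DRic D3f : ι → ι → ι → ℝ) (Rm : ι → ι → ι → ι → ℝ) (dR gradf : ι → ℝ) (g : ι → ι → ℝ)
    (hsolD : ∀ i j k, DRic i j k = ρ * dR i * g j k - D3f i j k)
    (hRicciId : ∀ i j k, D3f i j k - D3f j i k = ∑ l, Rm i j k l * gradf l) (i j k : ι) :
    DRic i j k - DRic j i k = ρ * (dR i * g j k - dR j * g i k) + ∑ l, Rm j i k l * gradf l := by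
  rw [hsolD, hsolD, ← hRicciId j i k]
  ring

theorem one_sub_mul_div_eq {m : ℝ} (hm : m ≠ 0) (ρ : ℝ) :
    (1 - 2 * m * ρ) / (2 * m) = 1 / (2 * m) - ρ := by
  field_simp

theorem stmt_8_general (n : ℕ) (hn : 3 ≤ n) (ρ : ℝ)
    (DRic D3f : Fin n → Fin n → Fin n → ℝ)
    (Rm : Fin n → Fin n → Fin n → Fin n → ℝ)
    (C : Fin n → Fin n → Fin n → ℝ)
    (dR gradf : Fin n → ℝ) (g : Fin n → Fin n → ℝ)
    (hC : ∀ i j k, C i j k = DRic i j k - DRic j i k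
      - (1 / (2 * ((n : ℝ) - 1))) * (g j k * dR i - g i k * dR j))
    (hsolD : ∀ i j k, DRic i j k = ρ * dR i * g j k - D3f i j k)
    (hRicciId : ∀ i j k, D3f i j k - D3f j i k = ∑ l, Rm i j k l * gradf l) :
    ∀ i j k, C i j k =
      -((1 - 2 * ((n : ℝ) - 1) * ρ) / (2 * ((n : ℝ) - 1)))
          * (dR i * g j k - dR j * g i k)
        + ∑ l, Rm j i k l * gradf l := by
  intro i j k
  have hn1 : (n : ℝ) - 1 ≠ 0 := by
    have : (3 : ℝ) ≤ n := by exact_mod_cast hn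
    linarith
  rw [hC, covDerivRicci_sub_swap_eq ρ DRic D3f Rm dR gradf g hsolD hRicciId,
    one_sub_mul_div_eq hn1]
  ring

/-- The Cotton tensor of a gradient ρ-Einstein soliton (eq. (cotton_rho)):
C_{ijk} = −((1−2(n−1)ρ)/(2(n−1)))(∇ᵢR g_{jk} − ∇ⱼR g_{ik}) + R_{jikl}∇^l f.
Pointwise in an orthonormal frame (g = δ): C is defined from ∇Ric and ∇R, the
soliton equation gives ∇ᵢR_{jk} = ρ∇ᵢR g_{jk} − ∇ᵢ∇ⱼ∇ₖf, and the Ricci identity is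
∇ᵢ∇ⱼ∇ₖf − ∇ⱼ∇ᵢ∇ₖf = R_{ijkl}∇^l f. -/
theorem stmt_8 (n : ℕ) (hn : 3 ≤ n) (ρ lam : ℝ)
    (DRic D3f : Fin n → Fin n → Fin n → ℝ)
    (Rm : Fin n → Fin n → Fin n → Fin n → ℝ)
    (C : Fin n → Fin n → Fin n → ℝ)
    (dR gradf : Fin n → ℝ) (g : Fin n → Fin n → ℝ)
    (hg : ∀ i j, g i j = if i = j then 1 else 0)
    (hC : ∀ i j k, C i j k = DRic i j k - DRic j i k
      - (1 / (2 * ((n : ℝ) - 1))) * (g j k * dR i - g i k * dR j))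
    (hsolD : ∀ i j k, DRic i j k = ρ * dR i * g j k - D3f i j k)
    (hRicciId : ∀ i j k, D3f i j k - D3f j i k = ∑ l, Rm i j k l * gradf l) :
    ∀ i j k, C i j k =
      -((1 - 2 * ((n : ℝ) - 1) * ρ) / (2 * ((n : ℝ) - 1)))
          * (dR i * g j k - dR j * g i k)
        + ∑ l, Rm j i k l * gradf l :=
  stmt_8_general n hn ρ DRic D3f Rm C dR gradf g hC hsolD hRicciId
end

section
/- Let (Mⁿ,g,f,λ), n ≥ 3, be a gradient ρ-Einstein soliton with vanishing Cotton tensor. Then for all vector fields X, Y, Z: Rm(X,Y,Z,∇f) = ((1 − 2(n−1)ρ)/(2(n−1)))·(⟨∇R,Y⟩⟨X,Z⟩ − ⟨∇R,X⟩⟨Y,Z⟩). -/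
open Matrix Finset

/-!
Antisymmetrising the differentiated soliton equation `∇ᵢRⱼₖ = ρ ∇ᵢR gⱼₖ − ∇ᵢ∇ⱼ∇ₖf` in `i, j` and
using the Ricci identity expresses `Rᵢⱼₖₗ∇ˡf` through `∇ᵢRⱼₖ − ∇ⱼRᵢₖ` and `∇R`; when the Cotton
tensor vanishes the former is itself a multiple of `gⱼₖ∇ᵢR − gᵢₖ∇ⱼR`, so `Rm(·,·,·,∇f)` is the
multiple `1/(2(n−1)) − ρ` of it, and contracting with `X, Y, Z` gives the claim.
-/

section CottonFree

variable {ι : Type*} [Fintype ι]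

theorem sum_curvature_mul_gradf_eq_of_cotton_eq_zero (a ρ : ℝ)
    (DRic D3f : ι → ι → ι → ℝ) (Rm : ι → ι → ι → ι → ℝ) (dR gradf : ι → ℝ) (g : ι → ι → ℝ)
    (hCzero : ∀ i j k, DRic i j k - DRic j i k - a * (g j k * dR i - g i k * dR j) = 0)
    (hsolD : ∀ i j k, DRic i j k = ρ * dR i * g j k - D3f i j k)
    (hRicciId : ∀ i j k, D3f i j k - D3f j i k = ∑ l, Rm i j k l * gradf l) (i j k : ι) :
    ∑ l, Rm i j k l * gradf l = (a - ρ) * (dR j * g i k - dR i * g j k) := by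
  rw [← hRicciId]
  linear_combination -hCzero i j k + hsolD i j k - hsolD j i k

theorem sum_tensor_mul_eq_of_contract_last [DecidableEq ι] (c : ℝ) (Rm : ι → ι → ι → ι → ℝ)
    (v w X Y Z : ι → ℝ)
    (h : ∀ i j k, ∑ l, Rm i j k l * w l =
      c * (v j * (if i = k then 1 else 0) - v i * (if j = k then 1 else 0))) :
    ∑ i, ∑ j, ∑ k, ∑ l, Rm i j k l * X i * Y j * Z k * w l =
      c * ((v ⬝ᵥ Y) * (X ⬝ᵥ Z) - (v ⬝ᵥ X) * (Y ⬝ᵥ Z)) := by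
  calc ∑ i, ∑ j, ∑ k, ∑ l, Rm i j k l * X i * Y j * Z k * w l
      = ∑ i, ∑ j, ∑ k, X i * Y j * Z k * ∑ l, Rm i j k l * w l := by
        simp only [mul_sum]
        refine sum_congr rfl fun i _ => sum_congr rfl fun j _ => sum_congr rfl fun k _ =>
          sum_congr rfl fun l _ => by ring
    _ = ∑ i, ∑ j, c * (X i * Z i * (v j * Y j) - v i * X i * (Y j * Z j)) := by
        refine sum_congr rfl fun i _ => sum_congr rfl fun j _ => ?_
        simp only [h, mul_sub, mul_ite, mul_one, mul_zero, sum_sub_distrib, sum_ite_eq,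
          mem_univ, if_true]
        ring
    _ = c * ((v ⬝ᵥ Y) * (X ⬝ᵥ Z) - (v ⬝ᵥ X) * (Y ⬝ᵥ Z)) := by
        simp only [dotProduct]
        rw [mul_comm (∑ i, v i * Y i), sum_mul_sum, sum_mul_sum, ← sum_sub_distrib, mul_sum]
        refine sum_congr rfl fun i _ => ?_
        rw [← sum_sub_distrib, mul_sum]

end CottonFree

theorem stmt_9_general (n : ℕ) (hn : 3 ≤ n) (ρ : ℝ)
    (DRic D3f : Fin n → Fin n → Fin n → ℝ)
    (Rm : Fin n → Fin n → Fin n → Fin n → ℝ)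
    (dR gradf : Fin n → ℝ) (g : Fin n → Fin n → ℝ)
    (hg : ∀ i j, g i j = if i = j then 1 else 0)
    (hCzero : ∀ i j k, DRic i j k - DRic j i k
      - (1 / (2 * ((n : ℝ) - 1))) * (g j k * dR i - g i k * dR j) = 0)
    (hsolD : ∀ i j k, DRic i j k = ρ * dR i * g j k - D3f i j k)
    (hRicciId : ∀ i j k, D3f i j k - D3f j i k = ∑ l, Rm i j k l * gradf l) :
    ∀ X Y Z : Fin n → ℝ,
      (∑ i, ∑ j, ∑ k, ∑ l, Rm i j k l * X i * Y j * Z k * gradf l) =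
        ((1 - 2 * ((n : ℝ) - 1) * ρ) / (2 * ((n : ℝ) - 1)))
          * ((dR ⬝ᵥ Y) * (X ⬝ᵥ Z) - (dR ⬝ᵥ X) * (Y ⬝ᵥ Z)) := by
  intro X Y Z
  have hn1 : (n : ℝ) - 1 ≠ 0 := by
    have : (3 : ℝ) ≤ n := by exact_mod_cast hn
    linarith
  have hcoeff : (1 - 2 * ((n : ℝ) - 1) * ρ) / (2 * ((n : ℝ) - 1)) =
      1 / (2 * ((n : ℝ) - 1)) - ρ := by
    field_simp
  rw [hcoeff]
  refine sum_tensor_mul_eq_of_contract_last _ Rm dR gradf X Y Z fun i j k => ?_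
  simpa only [hg] using
    sum_curvature_mul_gradf_eq_of_cotton_eq_zero _ ρ DRic D3f Rm dR gradf g hCzero hsolD
      hRicciId i j k

/-- For a gradient ρ-Einstein soliton with vanishing Cotton tensor (eq. (eq_2)):
Rm(X,Y,Z,∇f) = ((1−2(n−1)ρ)/(2(n−1)))(⟨∇R,Y⟩⟨X,Z⟩ − ⟨∇R,X⟩⟨Y,Z⟩).
Pointwise in an orthonormal frame (g = δ); the soliton equation gives
∇ᵢR_{jk} = ρ∇ᵢR g_{jk} − ∇ᵢ∇ⱼ∇ₖf, and the Ricci identity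
∇ᵢ∇ⱼ∇ₖf − ∇ⱼ∇ᵢ∇ₖf = R_{ijkl}∇^l f; C = 0 is assumed. -/
theorem stmt_9 (n : ℕ) (hn : 3 ≤ n) (ρ lam : ℝ)
    (DRic D3f : Fin n → Fin n → Fin n → ℝ)
    (Rm : Fin n → Fin n → Fin n → Fin n → ℝ)
    (dR gradf : Fin n → ℝ) (g : Fin n → Fin n → ℝ)
    (hg : ∀ i j, g i j = if i = j then 1 else 0)
    (hCzero : ∀ i j k, DRic i j k - DRic j i k
      - (1 / (2 * ((n : ℝ) - 1))) * (g j k * dR i - g i k * dR j) = 0)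
    (hsolD : ∀ i j k, DRic i j k = ρ * dR i * g j k - D3f i j k)
    (hRicciId : ∀ i j k, D3f i j k - D3f j i k = ∑ l, Rm i j k l * gradf l) :
    ∀ X Y Z : Fin n → ℝ,
      (∑ i, ∑ j, ∑ k, ∑ l, Rm i j k l * X i * Y j * Z k * gradf l) =
        ((1 - 2 * ((n : ℝ) - 1) * ρ) / (2 * ((n : ℝ) - 1)))
          * ((dR ⬝ᵥ Y) * (X ⬝ᵥ Z) - (dR ⬝ᵥ X) * (Y ⬝ᵥ Z)) :=
  stmt_9_general n hn ρ DRic D3f Rm dR gradf g hg hCzero hsolD hRicciId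
end
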